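/- Let k be a field of characteristic p > 0 and G a finite group. Every indecomposable finite-dimensional kG-module M has a vertex: a subgroup V ≤ G minimal such that M is a direct summand of Ind^G_V Res^G_V M; moreover any two vertices of M are conjugate in G, and every vertex of M is a p-subgroup of G. -/

import Mathlib

namespace Stmt

variable {k : Type*} [CommRing k]
variable {Γ : Type*} [Group Γ] (H : Subgroup Γ)
variable {N : Type*} [AddCommGroup N] [Module k N]
variable (ρ : Representation k H N)

/-- Concrete model of the induced module `kΓ ⊗_{kH} N`: functions `f : Γ → N`
with `f (g * h) = ρ h⁻¹ (f g)`; the elementary tensor `g ⊗ n` corresponds to the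
function supported on the coset `g H` with value `ρ (x⁻¹ g) n` at `x ∈ g H`. -/
def Ind : Submodule k (Γ → N) where
  carrier := {f | ∀ (g : Γ) (h : H), f (g * h) = ρ h⁻¹ (f g)}
  add_mem' := by
    intro a b ha hb g h
    simp only [Pi.add_apply, ha g h, hb g h, map_add]
  zero_mem' := by intro g h; simp
  smul_mem' := by
    intro c f hf g h
    simp only [Pi.smul_apply, hf g h, map_smul]

theorem mem_Ind {f : Γ → N} : f ∈ Ind H ρ ↔ ∀ (g : Γ) (h : H), f (g * h) = ρ h⁻¹ (f g) :=
  Iff.rfl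

/-- The representation of `Γ` on the induced module, `(g • f) x = f (g⁻¹ x)`. -/
def indRep : Representation k Γ (Ind H ρ) where
  toFun g :=
    { toFun := fun f => ⟨fun x => f.1 (g⁻¹ * x), fun x h => by
        simpa [mul_assoc] using f.2 (g⁻¹ * x) h⟩
      map_add' := fun f f' => rfl
      map_smul' := fun c f => rfl }
  map_one' := by
    refine LinearMap.ext fun f => Subtype.ext (funext fun x => ?_)
    simp
  map_mul' g g' := by
    refine LinearMap.ext fun f => Subtype.ext (funext fun x => ?_)
    simp [mul_assoc]

/-- The elementary tensor `g ⊗ n` in the induced module. -/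
def elt [DecidablePred (· ∈ H)] (g : Γ) (n : N) : Ind H ρ :=
  ⟨fun x => if hx : x⁻¹ * g ∈ H then ρ ⟨x⁻¹ * g, hx⟩ n else 0, by
    intro x h
    dsimp only
    have key : (x * (h : Γ))⁻¹ * g = (h⁻¹ : H) * (x⁻¹ * g) := by
      simp [mul_inv_rev, mul_assoc]
    by_cases hx : x⁻¹ * g ∈ H
    · have hmem : (x * (h : Γ))⁻¹ * g ∈ H := by
        rw [key]; exact H.mul_mem (H.inv_mem h.2) hx
      simp only [hmem, hx, dif_pos]
      have : (⟨(x * (h : Γ))⁻¹ * g, hmem⟩ : H) = h⁻¹ * ⟨x⁻¹ * g, hx⟩ := by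
        ext; simpa using key
      rw [this, map_mul]
      rfl
    · have hmem : ¬ ((x * (h : Γ))⁻¹ * g ∈ H) := by
        rw [key]
        intro hc
        exact hx (by simpa using H.mul_mem (H.inv_mem (H.inv_mem h.2)) hc)
      rw [dif_neg hmem, dif_neg hx, map_zero]⟩


section RelProj

variable {M : Type*} [AddCommGroup M] [Module k M]

/-- `M` (with `Γ`-action `σ`) is relatively `V`-projective: it is a direct summand
of the induced module `Ind_V^Γ (Res_V^Γ M)` via `Γ`-equivariant maps.  (For a module
this is equivalent to being a retract of a module induced from `V`.) -/
def IsRelativelyProjective (V : Subgroup Γ) (σ : Representation k Γ M) : Prop :=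
  ∃ (p : (Ind V (σ.comp V.subtype) : Submodule k (Γ → M)) →ₗ[k] M)
    (s : M →ₗ[k] (Ind V (σ.comp V.subtype) : Submodule k (Γ → M))),
    (∀ (g : Γ) (f : Ind V (σ.comp V.subtype)),
        p (indRep V (σ.comp V.subtype) g f) = σ g (p f)) ∧
    (∀ (g : Γ) (m : M), s (σ g m) = indRep V (σ.comp V.subtype) g (s m)) ∧
    p.comp s = LinearMap.id

/-- `M` (with `Γ`-action `σ`) is relatively projective with respect to a family of
subgroups `X i`: it is a direct summand of the direct sum over `i` of the modules
induced from `X i`, via `Γ`-equivariant maps. -/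
def IsRelativelyProjectiveFamily {ι : Type*} (X : ι → Subgroup Γ)
    (σ : Representation k Γ M) : Prop :=
  ∃ (p : (Π i : ι, (Ind (X i) (σ.comp (X i).subtype) : Submodule k (Γ → M))) →ₗ[k] M)
    (s : M →ₗ[k] (Π i : ι, (Ind (X i) (σ.comp (X i).subtype) : Submodule k (Γ → M)))),
    (∀ (g : Γ) (v : Π i : ι, (Ind (X i) (σ.comp (X i).subtype) : Submodule k (Γ → M))),
        p (fun i => indRep (X i) (σ.comp (X i).subtype) g (v i)) = σ g (p v)) ∧
    (∀ (g : Γ) (m : M) (i : ι),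
        s (σ g m) i = indRep (X i) (σ.comp (X i).subtype) g (s m i)) ∧
    p.comp s = LinearMap.id

/-- A representation is indecomposable: nonzero, and its only `Γ`-equivariant
idempotent endomorphisms are `0` and the identity. -/
def IsIndecomposableRep (σ : Representation k Γ M) : Prop :=
  Nontrivial M ∧
    ∀ e : M →ₗ[k] M, (∀ (g : Γ) (m : M), e (σ g m) = σ g (e m)) →
      e.comp e = e → e = 0 ∨ e = LinearMap.id

variable {M' : Type*} [AddCommGroup M'] [Module k M']

/-- `M` is a direct summand of `M'`, via `Γ`-equivariant maps. -/
def IsSummandOf (σ : Representation k Γ M) (τ : Representation k Γ M') : Prop :=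
  ∃ (p : M' →ₗ[k] M) (s : M →ₗ[k] M'),
    (∀ (g : Γ) (m' : M'), p (τ g m') = σ g (p m')) ∧
    (∀ (g : Γ) (m : M), s (σ g m) = τ g (s m)) ∧
    p.comp s = LinearMap.id

/-- Isomorphism of representations. -/
def IsIsoRep (σ : Representation k Γ M) (τ : Representation k Γ M') : Prop :=
  ∃ e : M ≃ₗ[k] M', ∀ (g : Γ) (m : M), e (σ g m) = τ g (e m)

end RelProj

/-!
Higman's criterion: `M` is relatively `V`-projective iff `id_M = Tr_V^G φ` for some
`V`-equivariant endomorphism `φ`, where `Tr_V^G φ = ∑_{gV ∈ G/V} g φ g⁻¹`. If this holds for `V`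
and for `W`, Mackey's formula writes `id_M = Tr_V^G φ ∘ Tr_W^G ψ` as a sum, over the double cosets
`VgW`, of traces from `V ∩ gWg⁻¹`. By Fitting's lemma `End_{kG}(M)` is local, so one of these terms
is invertible, and `M` is relatively `V ∩ gWg⁻¹`-projective. Hence a minimal such `V` lies in a
conjugate of every `W` from which `M` is relatively projective. So two vertices lie in conjugates of
each other and are conjugate, and taking for `W` a Sylow `p`-subgroup `P`, which qualifies because
`Tr_P^G ([G:P]⁻¹ id) = id`, shows that every vertex is a `p`-group.
-/

open Representation MulAction

section RelativeNorm

variable {G A : Type*} [Group G] [AddCommGroup A] [Module k A] {π : Representation k G A}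

theorem apply_out_eq_of_mem_invariants {V : Subgroup G} {a : A}
    (ha : a ∈ invariants (π.comp V.subtype)) (x : G) : π (x : G ⧸ V).out a = π x a := by
  obtain ⟨v, hv⟩ := QuotientGroup.mk_out_eq_mul V x
  rw [hv, map_mul, Module.End.mul_apply]
  exact congrArg (π x) (ha v)

theorem apply_smul_out_eq_of_mem_invariants {V : Subgroup G} {a : A}
    (ha : a ∈ invariants (π.comp V.subtype)) (g : G) (c : G ⧸ V) :
    π (g • c).out a = π g (π c.out a) := by
  conv_lhs => rw [← QuotientGroup.out_eq' c]
  rw [← Module.End.mul_apply, ← map_mul]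
  exact apply_out_eq_of_mem_invariants ha _

theorem mem_invariants_comp_stabilizer {X : Type*} [MulAction G X] {f : X → A}
    (hf : ∀ (g : G) (x : X), f (g • x) = π g (f x)) (x : X) :
    f x ∈ invariants (π.comp (stabilizer G x).subtype) := fun s => by
  rw [MonoidHom.comp_apply, Subgroup.subtype_apply, ← hf, mem_stabilizer_iff.1 s.2]

open scoped Classical

variable [Fintype G]

variable (π) in
/-- On `V`-invariant `a` this does not depend on the choice of coset representatives; applied to
`linHom σ σ` it is the relative trace `Tr_V^G` of endomorphisms. -/
noncomputable def relNorm (V : Subgroup G) : Module.End k A := ∑ c : G ⧸ V, π c.out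

theorem relNorm_apply (V : Subgroup G) (a : A) : relNorm π V a = ∑ c : G ⧸ V, π c.out a :=
  LinearMap.sum_apply ..

theorem relNorm_mem_invariants {V : Subgroup G} {a : A}
    (ha : a ∈ invariants (π.comp V.subtype)) : relNorm π V a ∈ π.invariants := by
  intro g
  rw [relNorm_apply, map_sum]
  exact Fintype.sum_bijective (g • ·) (MulAction.bijective g) _ _ fun c =>
    (apply_smul_out_eq_of_mem_invariants ha g c).symm

theorem relNorm_eq_index_smul {a : A} (ha : a ∈ π.invariants) (V : Subgroup G) :
    relNorm π V a = V.index • a := by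
  simp [relNorm_apply, ha _, Finset.card_univ, Subgroup.index, Nat.card_eq_fintype_card]

theorem sum_eq_sum_relNorm_stabilizer {X : Type*} [MulAction G X] [Fintype X] {f : X → A}
    (hf : ∀ (g : G) (x : X), f (g • x) = π g (f x))
    {r : Quotient (orbitRel G X) → X} (hr : Function.LeftInverse Quotient.mk'' r) :
    ∑ x, f x = ∑ ω, relNorm π (stabilizer G (r ω)) (f (r ω)) := by
  rw [← (selfEquivSigmaOrbitsQuotientStabilizer' G X hr).symm.sum_comp, Fintype.sum_sigma]
  refine Fintype.sum_congr _ _ fun ω => ?_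
  rw [relNorm_apply]
  refine Fintype.sum_congr _ _ fun c => ?_
  rw [← hf]
  congr 1
  conv_lhs => rw [← QuotientGroup.out_eq' c]
  rfl

end RelativeNorm

section LinHom

variable {G A₁ A₂ A₃ : Type*} [Group G] [AddCommGroup A₁] [Module k A₁] [AddCommGroup A₂]
  [Module k A₂] [AddCommGroup A₃] [Module k A₃]
  {ρ₁ : Representation k G A₁} {ρ₂ : Representation k G A₂} {ρ₃ : Representation k G A₃}

theorem linHom_comp (g : G) (a : A₂ →ₗ[k] A₃) (b : A₁ →ₗ[k] A₂) :
    linHom ρ₁ ρ₃ g (a ∘ₗ b) = linHom ρ₂ ρ₃ g a ∘ₗ linHom ρ₁ ρ₂ g b := by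
  ext x
  simp [← Module.End.mul_apply (ρ₂ g⁻¹), ← map_mul]

theorem apply_comm_of_linHom_eq {g : G} {f : A₁ →ₗ[k] A₂} (h : linHom ρ₁ ρ₂ g f = f) (x : A₁) :
    f (ρ₁ g x) = ρ₂ g (f x) := by
  conv_lhs => rw [← h]
  rw [linHom_apply, LinearMap.comp_apply, LinearMap.comp_apply, ← Module.End.mul_apply,
    ← map_mul, inv_mul_cancel, map_one, Module.End.one_apply]

theorem linHom_mul (g : G) (a b : Module.End k A₁) :
    linHom ρ₁ ρ₁ g (a * b) = linHom ρ₁ ρ₁ g a * linHom ρ₁ ρ₁ g b :=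
  linHom_comp g a b

theorem mem_invariants_linHom_iff_commute {f : Module.End k A₁} :
    f ∈ (linHom ρ₁ ρ₁).invariants ↔ ∀ g, Commute f (ρ₁ g) :=
  (mem_linHom_invariants_iff_isIntertwining f).trans <|
    (isIntertwiningMap_iff ..).trans <| forall_congr' fun _ =>
      ⟨fun h => LinearMap.ext h, fun h v => LinearMap.congr_fun h v⟩

variable [Fintype G]

theorem relNorm_linHom_comp_of_mem_invariants_right (V : Subgroup G) (a : A₂ →ₗ[k] A₃)
    {b : A₁ →ₗ[k] A₂} (hb : b ∈ (linHom ρ₁ ρ₂).invariants) :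
    relNorm (linHom ρ₁ ρ₃) V (a ∘ₗ b) = relNorm (linHom ρ₂ ρ₃) V a ∘ₗ b := by
  ext x
  rw [relNorm_apply, relNorm_apply, LinearMap.comp_apply, LinearMap.sum_apply, LinearMap.sum_apply]
  simp only [linHom_comp (ρ₂ := ρ₂), hb _, LinearMap.comp_apply]

theorem relNorm_linHom_comp_of_mem_invariants_left (V : Subgroup G) {a : A₂ →ₗ[k] A₃}
    (ha : a ∈ (linHom ρ₂ ρ₃).invariants) (b : A₁ →ₗ[k] A₂) :
    relNorm (linHom ρ₁ ρ₃) V (a ∘ₗ b) = a ∘ₗ relNorm (linHom ρ₁ ρ₂) V b := by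
  ext x
  rw [relNorm_apply, relNorm_apply, LinearMap.comp_apply, LinearMap.sum_apply, LinearMap.sum_apply,
    map_sum]
  simp only [linHom_comp (ρ₂ := ρ₂), ha _, LinearMap.comp_apply]

end LinHom

section Induced

open scoped Classical

noncomputable def indSupportProj : Module.End k (Ind H ρ) where
  toFun f := ⟨fun x => if x ∈ H then f.1 x else 0, fun x h => by
    simp only [H.mul_mem_cancel_right h.2]
    split_ifs <;> simp [f.2 x h]⟩
  map_add' f f' := by ext x; by_cases hx : x ∈ H <;> simp [hx]
  map_smul' c f := by ext x; by_cases hx : x ∈ H <;> simp [hx]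

theorem indSupportProj_apply (f : Ind H ρ) (x : Γ) :
    (indSupportProj H ρ f).1 x = if x ∈ H then f.1 x else 0 :=
  rfl

theorem indRep_apply (g : Γ) (f : Ind H ρ) (x : Γ) : (indRep H ρ g f).1 x = f.1 (g⁻¹ * x) :=
  rfl

theorem indSupportProj_mem_invariants :
    indSupportProj H ρ ∈ invariants ((linHom (indRep H ρ) (indRep H ρ)).comp H.subtype) := by
  intro h
  refine LinearMap.ext fun f => Subtype.ext (funext fun x => ?_)
  simp [indRep_apply, indSupportProj_apply, H.mul_mem_cancel_left (H.inv_mem h.2)]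

theorem relNorm_indSupportProj [Fintype Γ] :
    relNorm (linHom (indRep H ρ) (indRep H ρ)) H (indSupportProj H ρ) = 1 := by
  refine LinearMap.ext fun f => Subtype.ext (funext fun x => ?_)
  have hcoset (c : Γ ⧸ H) : c.out⁻¹ * x ∈ H ↔ c = x := by
    rw [← QuotientGroup.eq, QuotientGroup.out_eq']
  simp [relNorm_apply, indRep_apply, indSupportProj_apply, hcoset]

end Induced

section Higman

variable {G M : Type*} [Group G] [AddCommGroup M] [Module k M] {σ : Representation k G M}
  {V : Subgroup G}

variable (σ V) in
def indEvalOne : Ind V (σ.comp V.subtype) →ₗ[k] M :=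
  LinearMap.proj (1 : G) ∘ₗ (Ind V (σ.comp V.subtype)).subtype

theorem indEvalOne_mem_invariants :
    indEvalOne σ V ∈ invariants ((linHom (indRep V (σ.comp V.subtype)) σ).comp V.subtype) := by
  intro v
  refine LinearMap.ext fun f => ?_
  have hf := f.2 1 v
  simp only [one_mul] at hf
  simp [indEvalOne, indRep_apply, hf, ← Module.End.mul_apply, ← map_mul]

def toInd {φ : Module.End k M} (hφ : φ ∈ invariants ((linHom σ σ).comp V.subtype)) :
    M →ₗ[k] Ind V (σ.comp V.subtype) where
  toFun m := ⟨fun x => φ (σ x⁻¹ m), fun x v => by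
    show φ (σ (x * v)⁻¹ m) = σ ((v⁻¹ : V) : G) (φ (σ x⁻¹ m))
    rw [mul_inv_rev, map_mul, Module.End.mul_apply]
    exact apply_comm_of_linHom_eq (hφ v⁻¹) _⟩
  map_add' m m' := by ext x; simp
  map_smul' c m := by ext x; simp

theorem toInd_mem_invariants {φ : Module.End k M}
    (hφ : φ ∈ invariants ((linHom σ σ).comp V.subtype)) :
    toInd hφ ∈ (linHom σ (indRep V (σ.comp V.subtype))).invariants := by
  intro g
  refine LinearMap.ext fun m => Subtype.ext (funext fun x => ?_)
  show φ (σ (g⁻¹ * x)⁻¹ (σ g⁻¹ m)) = φ (σ x⁻¹ m)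
  simp only [← Module.End.mul_apply, ← map_mul, mul_inv_rev, inv_inv, mul_assoc, mul_inv_cancel,
    mul_one]

theorem indEvalOne_comp_toInd {φ : Module.End k M}
    (hφ : φ ∈ invariants ((linHom σ σ).comp V.subtype)) : indEvalOne σ V ∘ₗ toInd hφ = φ := by
  ext m
  simp [indEvalOne, toInd]

theorem isRelativelyProjective_iff_exists_relNorm_eq_one [Fintype G] :
    IsRelativelyProjective V σ ↔
      ∃ φ ∈ invariants ((linHom σ σ).comp V.subtype), relNorm (linHom σ σ) V φ = 1 := by
  constructor
  · rintro ⟨p, s, hp, hs, hps⟩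
    have hp' : p ∈ (linHom (indRep V (σ.comp V.subtype)) σ).invariants :=
      (mem_linHom_invariants_iff_isIntertwining p).2 ⟨hp⟩
    have hs' : s ∈ (linHom σ (indRep V (σ.comp V.subtype))).invariants :=
      (mem_linHom_invariants_iff_isIntertwining s).2 ⟨hs⟩
    refine ⟨p ∘ₗ indSupportProj V _ ∘ₗ s, fun v => ?_, ?_⟩
    · show linHom σ σ v _ = _
      rw [linHom_comp (ρ₂ := indRep V _), linHom_comp (ρ₂ := indRep V _), hp' _, hs' _]
      exact congrArg (p ∘ₗ · ∘ₗ s) (indSupportProj_mem_invariants V _ v)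
    · rw [relNorm_linHom_comp_of_mem_invariants_left _ hp',
        relNorm_linHom_comp_of_mem_invariants_right _ _ hs', relNorm_indSupportProj]
      exact hps
  · rintro ⟨φ, hφ, hnorm⟩
    refine ⟨relNorm (linHom (indRep V (σ.comp V.subtype)) σ) V (indEvalOne σ V), toInd hφ,
      fun g f => apply_comm_of_linHom_eq (relNorm_mem_invariants indEvalOne_mem_invariants g) f,
      fun g m => apply_comm_of_linHom_eq (toInd_mem_invariants hφ g) m, ?_⟩
    rw [← relNorm_linHom_comp_of_mem_invariants_right _ _ (toInd_mem_invariants hφ),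
      indEvalOne_comp_toInd, hnorm]
    rfl

theorem isRelativelyProjective_of_isUnit_relNorm [Fintype G] {φ : Module.End k M}
    (hφ : φ ∈ invariants ((linHom σ σ).comp V.subtype))
    (h : IsUnit (relNorm (linHom σ σ) V φ)) : IsRelativelyProjective V σ := by
  obtain ⟨u, hu⟩ := h
  have hinv : (↑u⁻¹ : Module.End k M) ∈ (linHom σ σ).invariants :=
    mem_invariants_linHom_iff_commute.2 fun g => Commute.units_inv_left
      (hu ▸ mem_invariants_linHom_iff_commute.1 (relNorm_mem_invariants hφ) g)
  refine isRelativelyProjective_iff_exists_relNorm_eq_one.2 ⟨φ * ↑u⁻¹, fun v => ?_, ?_⟩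
  · show linHom σ σ v (φ * ↑u⁻¹) = _
    rw [linHom_mul, hinv v]
    exact congrArg (· * _) (hφ v)
  · rw [Module.End.mul_eq_comp, relNorm_linHom_comp_of_mem_invariants_right _ _ hinv, ← hu]
    exact u.mul_inv

theorem isRelativelyProjective_of_isUnit_index [Fintype G] (h : IsUnit (V.index : k)) :
    IsRelativelyProjective V σ := by
  have hone : (1 : Module.End k M) ∈ (linHom σ σ).invariants :=
    mem_invariants_linHom_iff_commute.2 fun g => Commute.one_left _
  refine isRelativelyProjective_of_isUnit_relNorm (fun v => hone v) ?_
  rw [relNorm_eq_index_smul hone, ← Nat.cast_smul_eq_nsmul k, ← Algebra.algebraMap_eq_smul_one]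
  exact h.map _

end Higman

section Mackey

open scoped Classical

variable {G M : Type*} [Group G] [AddCommGroup M] [Module k M]
  {σ : Representation k G M} {V W : Subgroup G}

theorem linHom_out_mul_linHom_out_smul {φ ψ : Module.End k M}
    (hφ : φ ∈ invariants ((linHom σ σ).comp V.subtype))
    (hψ : ψ ∈ invariants ((linHom σ σ).comp W.subtype)) (g : G) (x : (G ⧸ V) × (G ⧸ W)) :
    linHom σ σ (g • x).1.out φ * linHom σ σ (g • x).2.out ψ =
      linHom σ σ g (linHom σ σ x.1.out φ * linHom σ σ x.2.out ψ) := by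
  rw [linHom_mul]
  exact congrArg₂ (· * ·) (apply_smul_out_eq_of_mem_invariants hφ g x.1)
    (apply_smul_out_eq_of_mem_invariants hψ g x.2)

variable [Fintype G]

/-- Mackey's formula: the `G`-orbits on `G ⧸ V × G ⧸ W` are the double cosets `VgW`. -/
theorem relNorm_mul_relNorm {φ ψ : Module.End k M}
    (hφ : φ ∈ invariants ((linHom σ σ).comp V.subtype))
    (hψ : ψ ∈ invariants ((linHom σ σ).comp W.subtype))
    {r : Quotient (orbitRel G ((G ⧸ V) × (G ⧸ W))) → (G ⧸ V) × (G ⧸ W)}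
    (hr : Function.LeftInverse Quotient.mk'' r) :
    relNorm (linHom σ σ) V φ * relNorm (linHom σ σ) W ψ =
      ∑ ω, relNorm (linHom σ σ) (stabilizer G (r ω))
        (linHom σ σ (r ω).1.out φ * linHom σ σ (r ω).2.out ψ) := by
  rw [relNorm_apply, relNorm_apply, Finset.sum_mul_sum, ← Fintype.sum_prod_type']
  exact sum_eq_sum_relNorm_stabilizer (linHom_out_mul_linHom_out_smul hφ hψ) hr

end Mackey

section Indecomposable

variable {k G M : Type*} [Field k] [Group G] [AddCommGroup M] [Module k M] [Module.Finite k M]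
  {σ : Representation k G M}

open LinearMap in
theorem IsIndecomposableRep.isUnit_or_isNilpotent (hM : IsIndecomposableRep σ)
    {f : Module.End k M} (hf : ∀ g, Commute f (σ g)) : IsUnit f ∨ IsNilpotent f := by
  obtain ⟨n, hn, hc⟩ :=
    ((Filter.eventually_ge_atTop 1).and f.eventually_isCompl_ker_pow_range_pow).exists
  have hfn (g : G) (x : M) : (f ^ n) (σ g x) = σ g ((f ^ n) x) :=
    LinearMap.congr_fun ((hf g).pow_left n).eq x
  -- the projection of the Fitting decomposition `M = ker fⁿ ⊕ range fⁿ` onto `range fⁿ`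
  set e := (range (f ^ n)).projection (ker (f ^ n)) hc.symm
  have he : IsIdempotentElem e := Submodule.isIdempotentElem_projection _
  have heσ (g : G) : Commute e (σ g) := by
    refine he.commute_iff.2 ⟨?_, ?_⟩ <;>
      simp only [e, Submodule.range_projection, Submodule.ker_projection,
        Module.End.mem_invtSubmodule_iff_forall_mem_of_mem]
    · rintro _ ⟨y, rfl⟩
      exact ⟨σ g y, hfn g y⟩
    · intro x hx
      rw [mem_ker, hfn, mem_ker.1 hx, map_zero]
  rcases hM.2 e (fun g m => LinearMap.congr_fun (heσ g).eq m) he.eq with h0 | h1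
  · right
    refine ⟨n, range_eq_bot.1 ?_⟩
    rw [← Submodule.range_projection hc.symm]
    exact range_eq_bot.2 h0
  · left
    refine (isUnit_pow_iff (n := n) (by omega)).1 ((isUnit_iff_ker_eq_bot _).2 ?_)
    rw [← Submodule.ker_projection hc.symm]
    exact (congrArg ker h1).trans ker_id

theorem IsIndecomposableRep.isUnit_or_isUnit_of_isUnit_add (hM : IsIndecomposableRep σ)
    {f f' : Module.End k M} (hf : ∀ g, Commute f (σ g)) (hf' : ∀ g, Commute f' (σ g))
    (h : IsUnit (f + f')) : IsUnit f ∨ IsUnit f' := by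
  obtain ⟨u, hu⟩ := h
  have hu' (g : G) : Commute (↑u⁻¹ : Module.End k M) (σ g) :=
    Commute.units_inv_left (hu ▸ (hf g).add_left (hf' g))
  by_contra! hnot
  have hnil : IsNilpotent (↑u⁻¹ * f) := by
    refine ((hM.isUnit_or_isNilpotent fun g => (hu' g).mul_left (hf g))).resolve_left fun h => ?_
    exact hnot.1 ((Units.isUnit_units_mul _ _).1 h)
  have hsum : 1 - ↑u⁻¹ * f = ↑u⁻¹ * f' := by
    rw [sub_eq_iff_eq_add', ← mul_add, ← hu, Units.inv_mul]
  exact hnot.2 ((Units.isUnit_units_mul _ _).1 (hsum ▸ hnil.isUnit_one_sub))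

theorem IsIndecomposableRep.exists_isUnit_of_isUnit_sum (hM : IsIndecomposableRep σ) {ι : Type*}
    {s : Finset ι} {f : ι → Module.End k M} (hf : ∀ i ∈ s, ∀ g, Commute (f i) (σ g))
    (h : IsUnit (∑ i ∈ s, f i)) : ∃ i ∈ s, IsUnit (f i) := by
  classical
  induction s using Finset.induction_on with
  | empty =>
    have := hM.1
    exact absurd h (by simp)
  | insert a s ha ih =>
    rw [Finset.sum_insert ha] at h
    simp only [Finset.mem_insert, forall_eq_or_imp] at hf
    rcases hM.isUnit_or_isUnit_of_isUnit_add hf.1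
        (fun g => Commute.sum_left _ _ _ fun i hi => hf.2 i hi g) h with h | h
    · exact ⟨a, Finset.mem_insert_self a s, h⟩
    · obtain ⟨i, hi, hu⟩ := ih hf.2 h
      exact ⟨i, Finset.mem_insert_of_mem hi, hu⟩

end Indecomposable

section Stabilizer

variable {G : Type*} [Group G]

theorem stabilizer_prodMk {X Y : Type*} [MulAction G X] [MulAction G Y] (x : X) (y : Y) :
    stabilizer G (x, y) = stabilizer G x ⊓ stabilizer G y := by
  ext g
  simp [mem_stabilizer_iff]

theorem stabilizer_quotient_mk (W : Subgroup G) (g : G) :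
    stabilizer G (g : G ⧸ W) = W.map (MulAut.conj g).toMonoidHom := by
  have hg : (g : G ⧸ W) = g • ((1 : G) : G ⧸ W) := by
    rw [MulAction.Quotient.smul_mk, smul_eq_mul, mul_one]
  rw [hg, stabilizer_smul_eq_stabilizer_map_conj, stabilizer_quotient]

end Stabilizer

section Vertex

variable {k G M : Type*} [Field k] [Group G] [Fintype G] [AddCommGroup M] [Module k M]
  {σ : Representation k G M}

theorem isRelativelyProjective_sylow (p : ℕ) [Fact p.Prime] [CharP k p] (P : Sylow p G) :
    IsRelativelyProjective (P : Subgroup G) σ :=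
  isRelativelyProjective_of_isUnit_index <| Ne.isUnit fun h =>
    P.not_dvd_index ((CharP.cast_eq_zero_iff k p _).1 h)

variable [Module.Finite k M]

open scoped Classical in
theorem IsIndecomposableRep.exists_isRelativelyProjective_inf_map_conj
    (hM : IsIndecomposableRep σ) {V W : Subgroup G} (hV : IsRelativelyProjective V σ)
    (hW : IsRelativelyProjective W σ) :
    ∃ g : G, IsRelativelyProjective (V ⊓ W.map (MulAut.conj g).toMonoidHom) σ := by
  obtain ⟨φ, hφ, hφ1⟩ := isRelativelyProjective_iff_exists_relNorm_eq_one.1 hV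
  obtain ⟨ψ, hψ, hψ1⟩ := isRelativelyProjective_iff_exists_relNorm_eq_one.1 hW
  -- orbit representatives `(V, gW)`, whose stabilizers are `V ⊓ gWg⁻¹`
  let r (ω : Quotient (orbitRel G ((G ⧸ V) × (G ⧸ W)))) : (G ⧸ V) × (G ⧸ W) :=
    ω.out.1.out⁻¹ • ω.out
  have hr : Function.LeftInverse Quotient.mk'' r := fun ω =>
    (Quotient.sound (mem_orbit _ _)).trans ω.out_eq
  have hr₁ (ω) : (r ω).1 = ((1 : G) : G ⧸ V) := inv_smul_eq_iff.2 <| by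
    rw [MulAction.Quotient.smul_mk, smul_eq_mul, mul_one, QuotientGroup.out_eq']
  have hinv (ω) := mem_invariants_comp_stabilizer
    (f := fun x : (G ⧸ V) × (G ⧸ W) => linHom σ σ x.1.out φ * linHom σ σ x.2.out ψ)
    (linHom_out_mul_linHom_out_smul hφ hψ) (r ω)
  obtain ⟨ω, -, hunit⟩ := hM.exists_isUnit_of_isUnit_sum (s := Finset.univ)
    (fun ω _ => mem_invariants_linHom_iff_commute.1 (relNorm_mem_invariants (hinv ω)))
    (by rw [← relNorm_mul_relNorm hφ hψ hr, hφ1, hψ1, one_mul]; exact isUnit_one)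
  refine ⟨(r ω).2.out, ?_⟩
  have hstab : stabilizer G (r ω) = V ⊓ W.map (MulAut.conj (r ω).2.out).toMonoidHom := by
    rw [← Prod.mk.eta (p := r ω), stabilizer_prodMk, hr₁, stabilizer_quotient,
      ← stabilizer_quotient_mk, QuotientGroup.out_eq']
  exact hstab ▸ isRelativelyProjective_of_isUnit_relNorm (hinv ω) hunit

theorem IsIndecomposableRep.exists_le_map_conj_of_minimal (hM : IsIndecomposableRep σ)
    {V W : Subgroup G} (hV : Minimal (IsRelativelyProjective · σ) V)
    (hW : IsRelativelyProjective W σ) : ∃ g : G, V ≤ W.map (MulAut.conj g).toMonoidHom := by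
  obtain ⟨g, hg⟩ := hM.exists_isRelativelyProjective_inf_map_conj hV.1 hW
  exact ⟨g, (hV.2 hg inf_le_left).trans inf_le_right⟩

end Vertex

theorem statement18 (k : Type) [Field k] (p : ℕ) [Fact p.Prime] [CharP k p]
    (G : Type) [Group G] [Fintype G]
    (M : Type) [AddCommGroup M] [Module k M] [Module.Finite k M]
    (σ : Representation k G M) (hM : IsIndecomposableRep σ) :
    (∃ V : Subgroup G, Minimal (fun W => IsRelativelyProjective W σ) V) ∧
    (∀ V W : Subgroup G, Minimal (fun W' => IsRelativelyProjective W' σ) V →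
      Minimal (fun W' => IsRelativelyProjective W' σ) W →
      ∃ g : G, W = Subgroup.map (MulAut.conj g).toMonoidHom V) ∧
    (∀ V : Subgroup G, Minimal (fun W' => IsRelativelyProjective W' σ) V →
      IsPGroup p V) := by
  obtain ⟨P⟩ : Nonempty (Sylow p G) := inferInstance
  have hP : IsRelativelyProjective (P : Subgroup G) σ := isRelativelyProjective_sylow p P
  refine ⟨(Set.toFinite {W | IsRelativelyProjective W σ}).exists_minimal ⟨P, hP⟩,
    fun V W hV hW => ?_, fun V hV => ?_⟩
  · obtain ⟨g, hVW⟩ := hM.exists_le_map_conj_of_minimal hV hW.1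
    obtain ⟨h, hWV⟩ := hM.exists_le_map_conj_of_minimal hW hV.1
    refine ⟨h, Subgroup.eq_of_le_of_card_ge hWV ?_⟩
    calc Nat.card (V.map (MulAut.conj h).toMonoidHom)
        = Nat.card V := Subgroup.card_map_of_injective (MulAut.conj h).injective
      _ ≤ Nat.card (W.map (MulAut.conj g).toMonoidHom) := Subgroup.card_le_of_le hVW
      _ = Nat.card W := Subgroup.card_map_of_injective (MulAut.conj g).injective
  · obtain ⟨g, hVP⟩ := hM.exists_le_map_conj_of_minimal hV hP
    exact (P.isPGroup'.map _).to_le hVP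

end Stmt
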